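/- Lasserre–Avrachenkov integration formula for a quadratic form over a triangle: if H : ℝ² × ℝ² → ℝ is a symmetric bilinear form and T is a triangle in ℝ² with vertices v₀, v₁, v₂, then ∫_T H(x, x) dx = (Area(T)/6) · (H(v₀,v₀) + H(v₁,v₁) + H(v₂,v₂) + H(v₀,v₁) + H(v₀,v₂) + H(v₁,v₂)). -/

import Mathlib

open MeasureTheory Set

/-!
The affine map `p ↦ (1 - p₀ - p₁) v₀ + p₀ v₁ + p₁ v₂` carries the standard triangle
`{s, t ≥ 0, s + t ≤ 1}` onto `T`, with constant Jacobian `D = det(v₁ - v₀, v₂ - v₀)`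
(when `D = 0`, `T` lies in a line and both sides vanish). Pulled back along this map, `H(x, x)`
is the quadratic form `∑ λᵢ λⱼ H(vᵢ, vⱼ)` in the barycentric coordinates `λ = (1 - s - t, s, t)`,
and over the standard triangle `∫ λᵢ λⱼ = (1 + δᵢⱼ) / 24`; as `|D| = 2 Area(T)` this is the formula.
-/

theorem setIntegral_image_affineMap {E F : Type*} [NormedAddCommGroup E] [NormedSpace ℝ E]
    [FiniteDimensional ℝ E] [MeasurableSpace E] [BorelSpace E] (μ : Measure E)
    [μ.IsAddHaarMeasure] [NormedAddCommGroup F] [NormedSpace ℝ F] (f : E →ᵃ[ℝ] E)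
    {s : Set E} (hs : MeasurableSet s) (g : E → F) :
    ∫ x in f '' s, g x ∂μ = |LinearMap.det f.linear| • ∫ x in s, g (f x) ∂μ := by
  have hf : ⇑f = fun x => f.linear x + f 0 := f.decomp
  by_cases hdet : LinearMap.det f.linear = 0
  · have hnull : μ (f '' s) = 0 := by
      rw [hf, ← image_image (fun y => y + f 0) f.linear, image_add_right,
        measure_preimage_add_right, Measure.addHaar_image_linearMap, hdet]
      simp
    simp [Measure.restrict_eq_zero.2 hnull, hdet]
  · have hinj : Function.Injective f :=
      f.linear_injective_iff.1 (f.linear.equivOfDetNeZero hdet).injective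
    have hderiv : ∀ x, HasFDerivAt f (LinearMap.toContinuousLinearMap f.linear) x := fun x => by
      rw [hf]
      exact (LinearMap.toContinuousLinearMap f.linear).hasFDerivAt.add_const _
    rw [integral_image_eq_integral_abs_det_fderiv_smul μ hs
      (fun x _ => (hderiv x).hasFDerivWithinAt) hinj.injOn, integral_smul,
      LinearMap.det_toContinuousLinearMap]

theorem setIntegral_prod_fiberwise {α β E : Type*} [MeasurableSpace α] [MeasurableSpace β]
    [NormedAddCommGroup E] [NormedSpace ℝ E] {μ : Measure α} {ν : Measure β} [SFinite μ]
    [SFinite ν] {I : Set α} {J : α → Set β} (hI : MeasurableSet I)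
    (hJ : ∀ x, MeasurableSet (J x)) (hS : MeasurableSet {q : α × β | q.1 ∈ I ∧ q.2 ∈ J q.1})
    {f : α × β → E} (hf : IntegrableOn f {q | q.1 ∈ I ∧ q.2 ∈ J q.1} (μ.prod ν)) :
    ∫ q in {q : α × β | q.1 ∈ I ∧ q.2 ∈ J q.1}, f q ∂μ.prod ν =
      ∫ x in I, ∫ y in J x, f (x, y) ∂ν ∂μ := by
  rw [← integral_indicator hS, integral_prod _ ((integrable_indicator_iff hS).2 hf),
    ← integral_indicator hI]
  congr 1 with x
  by_cases hx : x ∈ I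
  · rw [indicator_of_mem hx, ← integral_indicator (hJ x)]
    congr 1 with y
    by_cases hy : y ∈ J x <;> simp [indicator, hx, hy]
  · simp [indicator, hx]

theorem intervalIntegral_cubic (a b c d u : ℝ) :
    ∫ x in (0 : ℝ)..u, (a + b * x + c * x ^ 2 + d * x ^ 3) =
      a * u + b * u ^ 2 / 2 + c * u ^ 3 / 3 + d * u ^ 4 / 4 := by
  repeat rw [intervalIntegral.integral_add]
  all_goals try exact (by fun_prop : Continuous _).intervalIntegrable _ _
  -- `simp` cannot match the linear term `b * x` against `r * f x` on its own
  simp [intervalIntegral.integral_const_mul b (fun x => x)]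
  ring

theorem setIntegral_preimage_finTwoArrow {E : Type*} [NormedAddCommGroup E] [NormedSpace ℝ E]
    (s : Set (ℝ × ℝ)) (g : ℝ → ℝ → E) :
    ∫ p in MeasurableEquiv.finTwoArrow ⁻¹' s, g (p 0) (p 1) = ∫ q in s, g q.1 q.2 :=
  (volume_preserving_finTwoArrow ℝ).setIntegral_preimage_emb
    (MeasurableEquiv.measurableEmbedding _) (fun q => g q.1 q.2) s

def stdTriangle : Set (ℝ × ℝ) := {q | q.1 ∈ Icc 0 1 ∧ q.2 ∈ Icc 0 (1 - q.1)}

theorem isClosed_stdTriangle : IsClosed stdTriangle := by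
  simp only [stdTriangle, mem_Icc, ofPred_and]
  refine .inter (.inter ?_ ?_) (.inter ?_ ?_) <;> exact isClosed_le (by fun_prop) (by fun_prop)

theorem isCompact_stdTriangle : IsCompact stdTriangle :=
  (isCompact_Icc (a := ((0 : ℝ), (0 : ℝ))) (b := (1, 1))).of_isClosed_subset
    isClosed_stdTriangle fun q ⟨⟨h₀, h₁⟩, h₂, h₃⟩ => ⟨⟨h₀, h₂⟩, h₁, by linarith⟩

theorem setIntegral_stdTriangle_quadratic (c₀ c₁ c₂ c₃ c₄ c₅ : ℝ) :
    ∫ q in stdTriangle,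
        (c₀ + c₁ * q.1 + c₂ * q.2 + c₃ * q.1 ^ 2 + c₄ * (q.1 * q.2) + c₅ * q.2 ^ 2) =
      c₀ / 2 + c₁ / 6 + c₂ / 6 + c₃ / 12 + c₄ / 24 + c₅ / 12 := by
  have hinner : ∀ s ∈ Icc (0 : ℝ) 1,
      ∫ t in Icc 0 (1 - s), (c₀ + c₁ * s + c₂ * t + c₃ * s ^ 2 + c₄ * (s * t) + c₅ * t ^ 2) =
        (c₀ + c₂ / 2 + c₅ / 3) + (c₁ - c₀ + c₄ / 2 - c₂ - c₅) * s +
          (c₃ - c₁ + c₂ / 2 - c₄ + c₅) * s ^ 2 + (-c₃ + c₄ / 2 - c₅ / 3) * s ^ 3 := by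
    intro s hs
    rw [integral_Icc_eq_integral_Ioc, ← intervalIntegral.integral_of_le (by linarith [hs.2])]
    have := intervalIntegral_cubic (c₀ + c₁ * s + c₃ * s ^ 2) (c₂ + c₄ * s) c₅ 0 (1 - s)
    convert this using 1
    · congr 1 with t
      ring
    · ring
  rw [show (volume : Measure (ℝ × ℝ)) = volume.prod volume from rfl, stdTriangle,
    setIntegral_prod_fiberwise measurableSet_Icc (fun _ => measurableSet_Icc)
      isClosed_stdTriangle.measurableSet
      ((by fun_prop : Continuous _).continuousOn.integrableOn_compact isCompact_stdTriangle),
    setIntegral_congr_fun measurableSet_Icc hinner, integral_Icc_eq_integral_Ioc,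
    ← intervalIntegral.integral_of_le zero_le_one, intervalIntegral_cubic]
  ring

theorem convex_stdTriangle : Convex ℝ stdTriangle := by
  rintro x ⟨⟨hx₀, hx₁⟩, hx₂, hx₃⟩ y ⟨⟨hy₀, hy₁⟩, hy₂, hy₃⟩ a b ha hb hab
  refine ⟨⟨?_, ?_⟩, ?_, ?_⟩ <;> simp only [Prod.fst_add, Prod.snd_add, Prod.smul_fst,
    Prod.smul_snd, smul_eq_mul] <;> nlinarith [mul_nonneg ha hx₀, mul_nonneg hb hy₀,
      mul_nonneg ha hx₂, mul_nonneg hb hy₂, mul_le_mul_of_nonneg_left hx₃ ha,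
      mul_le_mul_of_nonneg_left hy₃ hb, mul_le_mul_of_nonneg_left hx₁ ha,
      mul_le_mul_of_nonneg_left hy₁ hb]

theorem preimage_finTwoArrow_stdTriangle :
    MeasurableEquiv.finTwoArrow ⁻¹' stdTriangle = convexHull ℝ {0, ![1, 0], ![0, 1]} := by
  apply Subset.antisymm
  · rintro p ⟨⟨h₀ : 0 ≤ p 0, -⟩, h₁ : 0 ≤ p 1, h₂ : p 1 ≤ 1 - p 0⟩
    have hp : p = ∑ i, ![1 - p 0 - p 1, p 0, p 1] i • ![0, ![1, 0], ![0, 1]] i := by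
      ext i; fin_cases i <;> simp [Fin.sum_univ_three]
    rw [hp]
    refine (convex_convexHull ℝ _).sum_mem (fun i _ => ?_) ?_
      (fun i _ => subset_convexHull ℝ _ ?_)
    · fin_cases i <;> simp <;> linarith
    · simp [Fin.sum_univ_three]
      ring
    · fin_cases i <;> simp
  · refine convexHull_min ?_
      (convex_stdTriangle.linear_preimage (LinearEquiv.finTwoArrow ℝ ℝ).toLinearMap)
    rintro _ (rfl | rfl | rfl) <;> simp [stdTriangle]

theorem setIntegral_stdTriangle_barycentric (h₀₀ h₁₁ h₂₂ h₀₁ h₀₂ h₁₂ : ℝ) :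
    ∫ q in stdTriangle,
        (h₀₀ * (1 - q.1 - q.2) ^ 2 + h₁₁ * q.1 ^ 2 + h₂₂ * q.2 ^ 2 +
          2 * h₀₁ * ((1 - q.1 - q.2) * q.1) + 2 * h₀₂ * ((1 - q.1 - q.2) * q.2) +
          2 * h₁₂ * (q.1 * q.2)) =
      (h₀₀ + h₁₁ + h₂₂ + h₀₁ + h₀₂ + h₁₂) / 12 := by
  convert setIntegral_stdTriangle_quadratic h₀₀ (2 * h₀₁ - 2 * h₀₀) (2 * h₀₂ - 2 * h₀₀)
    (h₀₀ + h₁₁ - 2 * h₀₁) (2 * h₀₀ - 2 * h₀₁ - 2 * h₀₂ + 2 * h₁₂) (h₀₀ + h₂₂ - 2 * h₀₂) using 1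
  · congr 1 with q
    ring
  · ring

def triangleMap (v₀ v₁ v₂ : Fin 2 → ℝ) : (Fin 2 → ℝ) →ᵃ[ℝ] (Fin 2 → ℝ) :=
  (Matrix.toLin' (Matrix.of ![v₁ - v₀, v₂ - v₀]).transpose).toAffineMap + AffineMap.const ℝ _ v₀

section triangleMap

variable (v₀ v₁ v₂ : Fin 2 → ℝ)

theorem triangleMap_apply (p : Fin 2 → ℝ) :
    triangleMap v₀ v₁ v₂ p = (1 - p 0 - p 1) • v₀ + p 0 • v₁ + p 1 • v₂ := by
  ext i
  fin_cases i <;> simp [triangleMap] <;> ring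

theorem det_triangleMap_linear :
    LinearMap.det (triangleMap v₀ v₁ v₂).linear =
      (v₁ 0 - v₀ 0) * (v₂ 1 - v₀ 1) - (v₁ 1 - v₀ 1) * (v₂ 0 - v₀ 0) := by
  simp [triangleMap, Matrix.det_fin_two]

theorem triangleMap_image_convexHull :
    triangleMap v₀ v₁ v₂ '' convexHull ℝ {0, ![1, 0], ![0, 1]} = convexHull ℝ {v₀, v₁, v₂} := by
  rw [AffineMap.image_convexHull]
  simp [image_insert_eq, triangleMap_apply]

end triangleMap

theorem stmt9 (H : (Fin 2 → ℝ) → (Fin 2 → ℝ) → ℝ)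
    (hsymm : ∀ x y, H x y = H y x)
    (hlin : ∀ y, IsLinearMap ℝ (fun x => H x y))
    (hlin' : ∀ x, IsLinearMap ℝ (fun y => H x y))
    (v₀ v₁ v₂ : Fin 2 → ℝ) :
    ∫ x in convexHull ℝ {v₀, v₁, v₂}, H x x =
      (|(v₁ 0 - v₀ 0) * (v₂ 1 - v₀ 1) - (v₁ 1 - v₀ 1) * (v₂ 0 - v₀ 0)| / 2) / 6 *
        (H v₀ v₀ + H v₁ v₁ + H v₂ v₂ + H v₀ v₁ + H v₀ v₂ + H v₁ v₂) := by
  let B : (Fin 2 → ℝ) →ₗ[ℝ] (Fin 2 → ℝ) →ₗ[ℝ] ℝ := LinearMap.mk₂ ℝ H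
    (fun x x' y => (hlin y).map_add x x') (fun c x y => (hlin y).map_smul c x)
    (fun x y y' => (hlin' x).map_add y y') (fun c x y => (hlin' x).map_smul c y)
  let Q : ℝ → ℝ → ℝ := fun s t =>
    H v₀ v₀ * (1 - s - t) ^ 2 + H v₁ v₁ * s ^ 2 + H v₂ v₂ * t ^ 2 +
      2 * H v₀ v₁ * ((1 - s - t) * s) + 2 * H v₀ v₂ * ((1 - s - t) * t) + 2 * H v₁ v₂ * (s * t)
  have hquad (p : Fin 2 → ℝ) :
      H (triangleMap v₀ v₁ v₂ p) (triangleMap v₀ v₁ v₂ p) = Q (p 0) (p 1) := by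
    change B _ _ = _
    simp only [B, Q, triangleMap_apply, map_add, map_smul, LinearMap.add_apply,
      LinearMap.smul_apply, smul_eq_mul, LinearMap.mk₂_apply, hsymm v₁ v₀, hsymm v₂ v₀,
      hsymm v₂ v₁]
    ring
  rw [← triangleMap_image_convexHull, ← preimage_finTwoArrow_stdTriangle,
    setIntegral_image_affineMap volume _
      (MeasurableEquiv.finTwoArrow.measurable isClosed_stdTriangle.measurableSet),
    det_triangleMap_linear]
  simp_rw [hquad]
  rw [setIntegral_preimage_finTwoArrow, setIntegral_stdTriangle_barycentric, smul_eq_mul]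
  ring
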